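/- arXiv:1311.7343 — 4 statements merged into one kernel-verified Lean document; each statement's English description precedes it below -/
import Mathlib

section
/- Let g : ℝⁿ → ℂ^{r×r} be a twice differentiable map such that g(x) is Hermitian positive definite for all x, and define Θ_{jk} := ∂/∂x_k (g⁻¹ ∂g/∂x_j). Then for all vectors u, v ∈ ℂ^r and all indices j, k, one has (Θ_{jk} u, v)_g = (u, Θ_{kj} v)_g, where (a,b)_g := b* g a. -/
open scoped ComplexOrder
open Matrix MeasureTheory

section Preamble

variable {ι : Type*} [Fintype ι] [DecidableEq ι] {r : ℕ}

/-- Partial derivative of a complex-valued function on `ι → ℝ` in direction `j`. -/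
noncomputable def pdC (j : ι) (f : (ι → ℝ) → ℂ) (x : ι → ℝ) : ℂ :=
  fderiv ℝ f x (Pi.single j 1)

/-- Partial derivative of a real-valued function on `ι → ℝ` in direction `j`. -/
noncomputable def pdR (j : ι) (f : (ι → ℝ) → ℝ) (x : ι → ℝ) : ℝ :=
  fderiv ℝ f x (Pi.single j 1)

/-- Entrywise partial derivative of a matrix-valued function. -/
noncomputable def mpd (j : ι) (g : (ι → ℝ) → Matrix (Fin r) (Fin r) ℂ) (x : ι → ℝ) :
    Matrix (Fin r) (Fin r) ℂ :=
  Matrix.of fun a b => pdC j (fun y => g y a b) x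

/-- The curvature-type quantity `Θ_{jk} = ∂_{x_k}(g⁻¹ ∂_{x_j} g)`. -/
noncomputable def Theta (g : (ι → ℝ) → Matrix (Fin r) (Fin r) ℂ) (j k : ι) (x : ι → ℝ) :
    Matrix (Fin r) (Fin r) ℂ :=
  mpd k (fun y => (g y)⁻¹ * mpd j g y) x

/-- The pairing `(u, v)_g = v* g u`. -/
noncomputable def ip (g : Matrix (Fin r) (Fin r) ℂ) (u v : Fin r → ℂ) : ℂ :=
  star v ⬝ᵥ g.mulVec u

/-- A metric: twice differentiable entries, Hermitian positive definite values. -/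
def IsMetric (g : (ι → ℝ) → Matrix (Fin r) (Fin r) ℂ) : Prop :=
  (∀ x, (g x).PosDef) ∧ ∀ a b, ContDiff ℝ 2 fun x => g x a b

/-- Log concavity in the sense of Nakano. -/
def NakanoLogConcave (g : (ι → ℝ) → Matrix (Fin r) (Fin r) ℂ) : Prop :=
  ∀ (x : ι → ℝ) (u : ι → Fin r → ℂ),
    ∑ j, ∑ k, ip (g x) ((Theta g j k x).mulVec (u j)) (u k) ≤ 0

/-- Log concavity in the sense of Griffiths. -/
def GriffithsLogConcave (g : (ι → ℝ) → Matrix (Fin r) (Fin r) ℂ) : Prop :=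
  ∀ (x : ι → ℝ) (u : Fin r → ℂ) (v : ι → ℂ),
    ∑ j, ∑ k, ip (g x) ((Theta g j k x).mulVec u) u * (v j * star (v k)) ≤ 0

end Preamble

/-! Differentiating `g⁻¹ * g = 1` gives `∂ₖ(g⁻¹) = -g⁻¹ (∂ₖ g) g⁻¹`, hence
`g Θⱼₖ = ∂ₖ∂ⱼ g - (∂ₖ g) g⁻¹ (∂ⱼ g)`. As `g`, `g⁻¹` and all partial derivatives of `g` are
Hermitian and second partial derivatives commute, `(g Θₖⱼ)ᴴ = g Θⱼₖ`, i.e. `g Θⱼₖ = Θₖⱼᴴ g`,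
which is the symmetry of `Θ` with respect to `(·,·)_g`. -/

section PartialDerivative

variable {ι : Type*} [Fintype ι] [DecidableEq ι] {j k : ι} {x : ι → ℝ}

lemma pdC_mul {f h : (ι → ℝ) → ℂ} (hf : DifferentiableAt ℝ f x) (hh : DifferentiableAt ℝ h x) :
    pdC j (fun y => f y * h y) x = pdC j f x * h x + f x * pdC j h x := by
  simp only [pdC, fderiv_fun_mul hf hh, _root_.add_apply, _root_.smul_apply, smul_eq_mul]
  ring

lemma pdC_sum {κ : Type*} {s : Finset κ} {f : κ → (ι → ℝ) → ℂ}
    (hf : ∀ i ∈ s, DifferentiableAt ℝ (f i) x) :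
    pdC j (fun y => ∑ i ∈ s, f i y) x = ∑ i ∈ s, pdC j (f i) x := by
  simp [pdC, fderiv_fun_sum hf]

lemma pdC_star (f : (ι → ℝ) → ℂ) : pdC j (fun y => star (f y)) x = star (pdC j f x) := by
  simp only [pdC, fderiv_star]
  simp

lemma differentiableAt_pdC {f : (ι → ℝ) → ℂ} (hf : ContDiff ℝ 2 f) :
    DifferentiableAt ℝ (pdC j f) x :=
  ((hf.fderiv_right le_rfl).differentiable one_ne_zero x).clm_apply
    (differentiableAt_const _)

lemma pdC_pdC_comm {f : (ι → ℝ) → ℂ} (hf : ContDiff ℝ 2 f) :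
    pdC k (pdC j f) x = pdC j (pdC k f) x := by
  have hsymm : IsSymmSndFDerivAt ℝ f x :=
    hf.contDiffAt.isSymmSndFDerivAt (by simp [minSmoothness_of_isRCLikeNormedField])
  have hdiff : DifferentiableAt ℝ (fderiv ℝ f) x :=
    (hf.fderiv_right le_rfl).differentiable one_ne_zero x
  have hsnd : ∀ v w : ι → ℝ, fderiv ℝ (fun y => fderiv ℝ f y v) x w = fderiv ℝ (fderiv ℝ f) x w v :=
    fun v w => by simp [fderiv_clm_apply hdiff (differentiableAt_const v)]
  unfold pdC
  rw [hsnd, hsnd, hsymm]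

end PartialDerivative

section MatrixInverse

variable {E : Type*} [NormedAddCommGroup E] [NormedSpace ℝ E] {ι : Type*} [Fintype ι]
  [DecidableEq ι] {A : E → Matrix ι ι ℂ} {x : E}

lemma differentiableAt_det (hA : ∀ a b, DifferentiableAt ℝ (fun y => A y a b) x) :
    DifferentiableAt ℝ (fun y => (A y).det) x := by
  simp only [det_apply']
  fun_prop

lemma differentiableAt_inv_apply (hA : ∀ a b, DifferentiableAt ℝ (fun y => A y a b) x)
    (hdet : (A x).det ≠ 0) (a b : ι) : DifferentiableAt ℝ (fun y => (A y)⁻¹ a b) x := by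
  have hcramer : ∀ y, (A y)⁻¹ a b = ((A y).det)⁻¹ * ((A y).updateRow b (Pi.single a 1)).det :=
    fun y => by simp [inv_def, Ring.inverse_eq_inv', adjugate_apply]
  simp only [hcramer]
  refine ((differentiableAt_det hA).inv hdet).mul (differentiableAt_det fun c d => ?_)
  rcases eq_or_ne c b with rfl | hc
  · simpa only [updateRow_self] using differentiableAt_const _
  · simpa only [updateRow_ne hc] using hA c d

end MatrixInverse

section MatrixDerivative

variable {ι : Type*} [Fintype ι] [DecidableEq ι] {r : ℕ} {j k : ι} {x : ι → ℝ}

lemma mpd_mul {A B : (ι → ℝ) → Matrix (Fin r) (Fin r) ℂ}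
    (hA : ∀ a b, DifferentiableAt ℝ (fun y => A y a b) x)
    (hB : ∀ a b, DifferentiableAt ℝ (fun y => B y a b) x) :
    mpd k (fun y => A y * B y) x = mpd k A x * B x + A x * mpd k B x := by
  ext a b
  simp only [mpd, of_apply, Matrix.add_apply, mul_apply]
  rw [pdC_sum fun c _ => (hA a c).fun_mul (hB c b), ← Finset.sum_add_distrib]
  exact Finset.sum_congr rfl fun c _ => pdC_mul (hA a c) (hB c b)

lemma conjTranspose_mpd (A : (ι → ℝ) → Matrix (Fin r) (Fin r) ℂ) :
    (mpd k A x)ᴴ = mpd k (fun y => (A y)ᴴ) x := by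
  ext a b
  exact (pdC_star _).symm

lemma mpd_mpd_comm {A : (ι → ℝ) → Matrix (Fin r) (Fin r) ℂ}
    (hA : ∀ a b, ContDiff ℝ 2 fun y => A y a b) :
    mpd k (mpd j A) x = mpd j (mpd k A) x := by
  ext a b
  exact pdC_pdC_comm (hA a b)

lemma mpd_inv {A : (ι → ℝ) → Matrix (Fin r) (Fin r) ℂ}
    (hA : ∀ a b, DifferentiableAt ℝ (fun y => A y a b) x) (hdet : ∀ y, IsUnit (A y).det) :
    mpd k (fun y => (A y)⁻¹) x = -((A x)⁻¹ * mpd k A x * (A x)⁻¹) := by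
  have hprod : mpd k (fun y => (A y)⁻¹) x * A x + (A x)⁻¹ * mpd k A x = 0 := by
    rw [← mpd_mul (differentiableAt_inv_apply hA (hdet x).ne_zero) hA]
    ext a b
    simp [nonsing_inv_mul _ (hdet _), mpd, pdC]
  calc mpd k (fun y => (A y)⁻¹) x
      = mpd k (fun y => (A y)⁻¹) x * A x * (A x)⁻¹ := by
        rw [mul_assoc, mul_nonsing_inv _ (hdet x), mul_one]
    _ = -((A x)⁻¹ * mpd k A x * (A x)⁻¹) := by
        rw [eq_neg_of_add_eq_zero_left hprod, neg_mul]

end MatrixDerivative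

lemma ip_mulVec_eq_of_mul_eq_conjTranspose_mul {r : ℕ} {G T S : Matrix (Fin r) (Fin r) ℂ}
    (h : G * T = Sᴴ * G) (u v : Fin r → ℂ) : ip G (T *ᵥ u) v = ip G u (S *ᵥ v) := by
  rw [ip, ip, mulVec_mulVec, h, ← mulVec_mulVec, star_mulVec, ← dotProduct_mulVec]

section Curvature

variable {ι : Type*} [Fintype ι] [DecidableEq ι] {r : ℕ} {g : (ι → ℝ) → Matrix (Fin r) (Fin r) ℂ}
  {x : ι → ℝ}

lemma mul_Theta (hg : ∀ a b, ContDiff ℝ 2 fun y => g y a b) (hdet : ∀ y, IsUnit (g y).det)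
    (j k : ι) :
    g x * Theta g j k x = mpd k (mpd j g) x - mpd k g x * (g x)⁻¹ * mpd j g x := by
  have hgdiff : ∀ {y} a b, DifferentiableAt ℝ (fun z => g z a b) y :=
    fun a b => (hg a b).differentiable two_ne_zero _
  rw [Theta, mpd_mul (B := mpd j g) (differentiableAt_inv_apply hgdiff (hdet x).ne_zero)
    (fun a b => differentiableAt_pdC (hg a b)), mpd_inv hgdiff hdet]
  simp only [mul_add, neg_mul, mul_neg, ← mul_assoc, mul_nonsing_inv _ (hdet x), one_mul]
  abel

lemma conjTranspose_mul_Theta (hherm : ∀ y, (g y).IsHermitian)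
    (hg : ∀ a b, ContDiff ℝ 2 fun y => g y a b) (hdet : ∀ y, IsUnit (g y).det) (j k : ι) :
    (g x * Theta g k j x)ᴴ = g x * Theta g j k x := by
  have hgH : (fun y => (g y)ᴴ) = g := funext fun y => (hherm y).eq
  rw [mul_Theta hg hdet, mul_Theta hg hdet, mpd_mpd_comm hg]
  simp only [conjTranspose_sub, conjTranspose_mul, conjTranspose_mpd, hgH,
    conjTranspose_nonsing_inv, (hherm x).eq, mul_assoc]

end Curvature

theorem statement0 {n r : ℕ} (g : (Fin n → ℝ) → Matrix (Fin r) (Fin r) ℂ)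
    (hg : IsMetric g) (j k : Fin n) (x : Fin n → ℝ) (u v : Fin r → ℂ) :
    ip (g x) ((Theta g j k x).mulVec u) v = ip (g x) u ((Theta g k j x).mulVec v) := by
  obtain ⟨hpos, hsmooth⟩ := hg
  have hdet : ∀ y, IsUnit (g y).det := fun y => (hpos y).det_pos.ne'.isUnit
  have hherm : ∀ y, (g y).IsHermitian := fun y => (hpos y).isHermitian
  refine ip_mulVec_eq_of_mul_eq_conjTranspose_mul ?_ u v
  rw [← conjTranspose_mul_Theta hherm hsmooth hdet, conjTranspose_mul, (hherm x).eq]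
end

section
/- Let g be a metric on ℝⁿ that is log concave in the sense of Griffiths. Then det g is a log concave function, i.e. x ↦ log det g(x) is concave. -/
open scoped ComplexOrder
open Matrix MeasureTheory

/-!
Along a line `x + t v`, Jacobi's formula gives `(log det g)' = Σ_j v_j tr(g⁻¹ ∂_j g)`, so
`(log det g)'' = Σ_{j,k} v_j v_k tr Θ_{jk}`. Choosing `S` with `S Sᴴ = g⁻¹`, the columns `u_a`
of `S` form a `g`-orthonormal basis, hence `tr Θ = Σ_a (Θ u_a, u_a)_g`; summing the Griffiths
inequality over this basis (with the real vector `v`) shows the second derivative is nonpositive.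
-/

theorem concaveOn_univ_of_hasDerivAt2_nonpos {f f' f'' : ℝ → ℝ}
    (hf : ∀ t, HasDerivAt f (f' t) t) (hf' : ∀ t, HasDerivAt f' (f'' t) t)
    (hf'' : ∀ t, f'' t ≤ 0) : ConcaveOn ℝ Set.univ f :=
  concaveOn_of_hasDerivWithinAt2_nonpos convex_univ
    (fun t _ => (hf t).continuousAt.continuousWithinAt) (fun t _ => (hf t).hasDerivWithinAt)
    (fun t _ => (hf' t).hasDerivWithinAt) fun t _ => hf'' t

theorem concaveOn_univ_of_forall_concaveOn_line {E : Type*} [AddCommGroup E] [Module ℝ E]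
    {f : E → ℝ} (h : ∀ x v : E, ConcaveOn ℝ Set.univ fun t : ℝ => f (x + t • v)) :
    ConcaveOn ℝ Set.univ f := by
  refine ⟨convex_univ, fun p _ q _ a b ha hb hab => ?_⟩
  have hpq := (h p (q - p)).2 (Set.mem_univ 0) (Set.mem_univ 1) ha hb hab
  obtain rfl : a = 1 - b := by linarith
  have hcomb : p + b • (q - p) = (1 - b) • p + b • q := by module
  simpa [hcomb] using hpq

section Determinant
variable {m : Type*} [Fintype m] [DecidableEq m]

theorem trace_adjugate_mul_eq_sum_det_updateRow {R : Type*} [CommRing R] (A B : Matrix m m R) :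
    (A.adjugate * B).trace = ∑ i, (A.updateRow i (B i)).det := by
  simp only [← cramer_transpose_apply, cramer_eq_adjugate_mulVec, ← adjugate_transpose, trace,
    diag, mul_apply, mulVec, dotProduct, transpose_apply]
  rw [Finset.sum_comm]

variable (𝕜 : Type*) {𝔸 : Type*} [NontriviallyNormedField 𝕜] [NormedCommRing 𝔸]
  [NormedAlgebra 𝕜 𝔸]

noncomputable def detRowContinuousMultilinear :
    ContinuousMultilinearMap 𝕜 (fun _ : m => m → 𝔸) 𝔸 where
  toMultilinearMap :=
    (detRowAlternating : (m → 𝔸) [⋀^m]→ₗ[𝔸] 𝔸).toMultilinearMap.restrictScalars 𝕜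
  cont := continuous_id.matrix_det

variable {𝕜}

theorem hasDerivAt_det {A : 𝕜 → Matrix m m 𝔸} {A' : Matrix m m 𝔸} {t : 𝕜}
    (h : ∀ i j, HasDerivAt (fun s => A s i j) (A' i j) t) :
    HasDerivAt (fun s => (A s).det) ((A t).adjugate * A').trace t := by
  have hA : HasDerivAt (fun s => (A s : m → m → 𝔸)) A' t :=
    hasDerivAt_pi.2 fun i => hasDerivAt_pi.2 (h i)
  rw [trace_adjugate_mul_eq_sum_det_updateRow]
  have H := ((detRowContinuousMultilinear 𝕜).hasFDerivAt (A t)).comp_hasDerivAt t hA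
  erw [ContinuousMultilinearMap.linearDeriv_apply] at H
  exact H

theorem hasDerivAt_log_re_det {A : ℝ → Matrix m m ℂ} {A' : Matrix m m ℂ} {t : ℝ}
    (hA : (A t).PosDef) (h : ∀ i j, HasDerivAt (fun s => A s i j) (A' i j) t) :
    HasDerivAt (fun s => Real.log (A s).det.re) ((A t)⁻¹ * A').trace.re t := by
  obtain ⟨hre_pos, him⟩ := Complex.pos_iff.mp hA.det_pos
  have hadj : (A t).adjugate = (A t).det • (A t)⁻¹ := by
    rw [inv_def, Ring.inverse_eq_inv', smul_smul, mul_inv_cancel₀ hA.det_pos.ne', one_smul]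
  have hdet := hasDerivAt_det h
  rw [hadj, smul_mul, trace_smul, smul_eq_mul] at hdet
  have hre : HasDerivAt (fun s => (A s).det.re) (((A t).det * ((A t)⁻¹ * A').trace).re) t :=
    Complex.reCLM.hasFDerivAt.comp_hasDerivAt t hdet
  rw [Complex.mul_re, ← him, zero_mul, sub_zero] at hre
  simpa only [mul_div_cancel_left₀ _ hre_pos.ne'] using hre.log hre_pos.ne'

end Determinant

section Entrywise
variable (𝕜 : Type*) {E 𝔸 m : Type*} [NontriviallyNormedField 𝕜] [NormedAddCommGroup E]
  [NormedSpace 𝕜 E] [NormedCommRing 𝔸] [NormedAlgebra 𝕜 𝔸] [Fintype m]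

def EntrywiseDifferentiable (M : E → Matrix m m 𝔸) : Prop :=
  ∀ i j, Differentiable 𝕜 fun y => M y i j

namespace EntrywiseDifferentiable
variable {𝕜} {M N : E → Matrix m m 𝔸}

theorem mul (hM : EntrywiseDifferentiable 𝕜 M) (hN : EntrywiseDifferentiable 𝕜 N) :
    EntrywiseDifferentiable 𝕜 fun y => M y * N y := fun i j => by
  simp only [mul_apply]
  exact Differentiable.fun_sum fun k _ => (hM i k).mul (hN k j)

variable [DecidableEq m]

theorem det (hM : EntrywiseDifferentiable 𝕜 M) : Differentiable 𝕜 fun y => (M y).det :=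
  have hdet : Differentiable 𝕜 (detRowContinuousMultilinear 𝕜 : (m → m → 𝔸) → 𝔸) :=
    fun A => ((detRowContinuousMultilinear 𝕜).hasFDerivAt A).differentiableAt
  hdet.comp (differentiable_pi.2 fun i => differentiable_pi.2 (hM i))

theorem adjugate (hM : EntrywiseDifferentiable 𝕜 M) :
    EntrywiseDifferentiable 𝕜 fun y => (M y).adjugate := fun i j => by
  have hrow : EntrywiseDifferentiable 𝕜 fun y => (M y).updateRow j (Pi.single i 1) :=
    fun k l => by
      simp only [updateRow_apply]
      split_ifs
      · exact differentiable_const _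
      · exact hM k l
  simpa only [adjugate_apply] using hrow.det

theorem inv {K : Type*} [NormedField K] [NormedAlgebra 𝕜 K] {M : E → Matrix m m K}
    (hM : EntrywiseDifferentiable 𝕜 M) (hdet : ∀ y, (M y).det ≠ 0) :
    EntrywiseDifferentiable 𝕜 fun y => (M y)⁻¹ := fun i j => by
  simp only [inv_def, Ring.inverse_eq_inv', Matrix.smul_apply, smul_eq_mul]
  exact (hM.det.inv hdet).mul (hM.adjugate i j)

end EntrywiseDifferentiable
end Entrywise

section Line
variable {ι : Type*} [Fintype ι] [DecidableEq ι] {r : ℕ}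

theorem hasDerivAt_comp_line {f : (ι → ℝ) → ℂ} {x v : ι → ℝ} {t : ℝ}
    (hf : DifferentiableAt ℝ f (x + t • v)) :
    HasDerivAt (fun s => f (x + s • v)) (∑ k, v k * pdC k f (x + t • v)) t := by
  have hline : HasDerivAt (fun s : ℝ => x + s • v) v t := by
    simpa using ((hasDerivAt_id t).smul_const v).const_add x
  have hexpand (T : (ι → ℝ) →L[ℝ] ℂ) : T v = ∑ k, v k * T (Pi.single k 1) := by
    conv_lhs => rw [← LinearMap.sum_single_apply (v := v), map_sum]
    refine Finset.sum_congr rfl fun k _ => ?_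
    rw [← Complex.real_smul, ← T.map_smul, ← Pi.single_smul', smul_eq_mul, mul_one]
  rw [show ∑ k, (v k : ℂ) * pdC k f (x + t • v) = fderiv ℝ f (x + t • v) v from
    (hexpand _).symm]
  exact hf.hasFDerivAt.comp_hasDerivAt t hline

theorem hasDerivAt_trace_comp_line {F : (ι → ℝ) → Matrix (Fin r) (Fin r) ℂ}
    (hF : EntrywiseDifferentiable ℝ F) (x v : ι → ℝ) (t : ℝ) :
    HasDerivAt (fun s => (F (x + s • v)).trace) (∑ k, v k * (mpd k F (x + t • v)).trace) t := by
  simp only [trace, diag, mpd, of_apply, Finset.mul_sum]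
  rw [Finset.sum_comm]
  exact HasDerivAt.fun_sum fun a _ => hasDerivAt_comp_line (hF a a _)

end Line

section Pairing
variable {r : ℕ}

theorem sum_ip_transpose_eq_trace (M Θ S : Matrix (Fin r) (Fin r) ℂ) :
    ∑ a, ip M (Θ *ᵥ Sᵀ a) (Sᵀ a) = (Sᴴ * M * Θ * S).trace := by
  have hcol (a : Fin r) : M *ᵥ Θ *ᵥ Sᵀ a = (M * Θ * S)ᵀ a := by
    rw [mulVec_mulVec]
    rfl
  simp only [ip, hcol, Matrix.mul_assoc _ _ S, Matrix.mul_assoc Sᴴ, trace, diag, dotProduct,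
    mul_apply (M := Sᴴ), Pi.star_apply, transpose_apply, conjTranspose_apply]

theorem sum_ip_transpose_eq_trace_of_inv_eq {M S : Matrix (Fin r) (Fin r) ℂ}
    (hM : IsUnit M.det) (hS : M⁻¹ = S * Sᴴ) (Θ : Matrix (Fin r) (Fin r) ℂ) :
    ∑ a, ip M (Θ *ᵥ Sᵀ a) (Sᵀ a) = Θ.trace := by
  rw [sum_ip_transpose_eq_trace, trace_mul_comm, ← Matrix.mul_assoc, ← Matrix.mul_assoc, ← hS,
    nonsing_inv_mul _ hM, Matrix.one_mul]

end Pairing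

section Metric
variable {ι : Type*} [Fintype ι] {r : ℕ} {g : (ι → ℝ) → Matrix (Fin r) (Fin r) ℂ}

theorem IsMetric.entrywiseDifferentiable (hg : IsMetric g) : EntrywiseDifferentiable ℝ g :=
  fun a b => (hg.2 a b).differentiable (by norm_num)

variable [DecidableEq ι]

open scoped MatrixOrder in
theorem GriffithsLogConcave.re_sum_trace_Theta_nonpos (hpos : ∀ x, (g x).PosDef)
    (hg : GriffithsLogConcave g) (x v : ι → ℝ) :
    (∑ j, ∑ k, (v j * v k : ℂ) * (Theta g j k x).trace).re ≤ 0 := by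
  obtain ⟨S, hS⟩ := CStarAlgebra.nonneg_iff_eq_mul_star_self.mp (hpos x).inv.posSemidef.nonneg
  have hsum := Finset.sum_nonpos fun a (_ : a ∈ Finset.univ) => hg x (Sᵀ a) fun j => (v j : ℂ)
  have heq : ∑ a, ∑ j, ∑ k, ip (g x) (Theta g j k x *ᵥ Sᵀ a) (Sᵀ a) * (v j * star (v k : ℂ))
      = ∑ j, ∑ k, (v j * v k : ℂ) * (Theta g j k x).trace := by
    rw [Finset.sum_comm]
    refine Finset.sum_congr rfl fun j _ => ?_
    rw [Finset.sum_comm]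
    refine Finset.sum_congr rfl fun k _ => ?_
    rw [← Finset.sum_mul, sum_ip_transpose_eq_trace_of_inv_eq (hpos x).det_pos.ne'.isUnit hS,
      Complex.star_def, Complex.conj_ofReal, mul_comm]
  rw [heq] at hsum
  exact (Complex.le_def.mp hsum).1

namespace IsMetric

theorem entrywiseDifferentiable_mpd (hg : IsMetric g) (j : ι) :
    EntrywiseDifferentiable ℝ (mpd j g) := fun a b =>
  (((hg.2 a b).fderiv_right (m := 1) (by norm_num)).clm_apply contDiff_const).differentiable
    (by norm_num)

theorem entrywiseDifferentiable_inv_mul_mpd (hg : IsMetric g) (j : ι) :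
    EntrywiseDifferentiable ℝ fun y => (g y)⁻¹ * mpd j g y :=
  (hg.entrywiseDifferentiable.inv fun y => (hg.1 y).det_pos.ne').mul
    (hg.entrywiseDifferentiable_mpd j)

theorem hasDerivAt_log_det_line (hg : IsMetric g) (x v : ι → ℝ) (t : ℝ) :
    HasDerivAt (fun s => Real.log (g (x + s • v)).det.re)
      (∑ j, v j * ((g (x + t • v))⁻¹ * mpd j g (x + t • v)).trace).re t := by
  have h := hasDerivAt_log_re_det (A := fun s => g (x + s • v))
    (A' := ∑ j, (v j : ℂ) • mpd j g (x + t • v)) (hg.1 _) fun a b => by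
      simpa [Matrix.sum_apply, mpd, mul_comm] using
        hasDerivAt_comp_line ((hg.entrywiseDifferentiable a b).differentiableAt) (t := t)
  simpa only [Matrix.mul_sum, trace_sum, Matrix.mul_smul, trace_smul, smul_eq_mul] using h

theorem hasDerivAt_sum_trace_inv_mul_mpd_line (hg : IsMetric g) (x v : ι → ℝ) (t : ℝ) :
    HasDerivAt (fun s => (∑ j, v j * ((g (x + s • v))⁻¹ * mpd j g (x + s • v)).trace).re)
      (∑ j, ∑ k, (v j * v k : ℂ) * (Theta g j k (x + t • v)).trace).re t := by
  have h := HasDerivAt.fun_sum fun j (_ : j ∈ Finset.univ) =>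
    (hasDerivAt_trace_comp_line (hg.entrywiseDifferentiable_inv_mul_mpd j) x v t).const_mul
      (v j : ℂ)
  simp only [Finset.mul_sum, ← mul_assoc] at h
  exact Complex.reCLM.hasFDerivAt.comp_hasDerivAt t h

end IsMetric
end Metric

theorem statement4 {n r : ℕ} (g : (Fin n → ℝ) → Matrix (Fin r) (Fin r) ℂ)
    (hg : IsMetric g) (hconc : GriffithsLogConcave g) :
    ConcaveOn ℝ Set.univ fun x => Real.log ((g x).det.re) :=
  concaveOn_univ_of_forall_concaveOn_line fun x v =>
    concaveOn_univ_of_hasDerivAt2_nonpos (hg.hasDerivAt_log_det_line x v)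
      (hg.hasDerivAt_sum_trace_inv_mul_mpd_line x v)
      fun _ => hconc.re_sum_trace_Theta_nonpos hg.1 _ v
end

section
/- (Schur product theorem) If A, B ∈ ℂ^{n×n} are positive semidefinite Hermitian matrices, then their entrywise (Hadamard) product M, with M_{jk} = A_{jk} B_{jk}, is also positive semidefinite. -/
open scoped ComplexOrder
open Matrix MeasureTheory

theorem statement8 {n : ℕ} (A B : Matrix (Fin n) (Fin n) ℂ)
    (hA : A.PosSemidef) (hB : B.PosSemidef) :
    (Matrix.of fun j k => A j k * B j k).PosSemidef :=
  hA.hadamard hB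
end

section
/- Let G : ℂⁿ → ℝ be continuous, subharmonic, and strictly positive, and assume ∫_{ℝⁿ×K} G(x+iy) dV(x,y) < ∞ for every compact K ⊂ ℝⁿ. Then the function y ↦ ∫_{ℝⁿ} G(x+iy) dV(x) is continuous on ℝⁿ. -/
open scoped ComplexOrder
open Matrix MeasureTheory

/-- The Euclidean ball of radius `ρ` in `ℝⁿ × ℝⁿ ≅ ℂⁿ`. -/
def eucBall2 {n : ℕ} (z : (Fin n → ℝ) × (Fin n → ℝ)) (ρ : ℝ) :
    Set ((Fin n → ℝ) × (Fin n → ℝ)) :=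
  {w | ∑ i, ((w.1 i - z.1 i) ^ 2 + (w.2 i - z.2 i) ^ 2) < ρ ^ 2}

/-! Near `y₀`, the sub-mean value inequality on unit balls bounds `G (x, y)` by
`c * ∫_{ball x 1 × closedBall y₀ 2} G`, where `c` is the inverse volume of the unit ball of `ℂⁿ`.
By Tonelli, the integral of this bound over `x` is `c * vol (ball 0 1) * ∫_{ℝⁿ × closedBall y₀ 2} G`,
which is finite, so dominated convergence gives continuity at `y₀`. -/

open Metric Set

section StripAverage

variable {E α : Type*} [NormedAddCommGroup E] [MeasurableSpace E] [BorelSpace E] [ProperSpace E]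
  [MeasurableSpace α]

theorem integrable_setIntegral_fst_preimage_ball (μ : Measure E) [μ.IsAddHaarMeasure]
    {ν : Measure (E × α)} [SFinite ν] {f : E × α → ℝ} (hf : Integrable f ν) (r : ℝ) :
    Integrable (fun x => ∫ w in Prod.fst ⁻¹' ball x r, f w ∂ν) μ := by
  set S : Set (E × (E × α)) := {p | dist p.2.1 p.1 < r}
  have hS : MeasurableSet S :=
    measurableSet_lt (measurable_snd.fst.dist measurable_fst) measurable_const
  have hslice (w : E × α) : (fun x => S.indicator (fun p => f p.2) (x, w)) =
      (ball w.1 r).indicator fun _ => f w := by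
    ext x
    simp [S, indicator, dist_comm]
  have hslice_norm (w : E × α) :
      ∫ x, ‖S.indicator (fun p => f p.2) (x, w)‖ ∂μ = ‖f w‖ * μ.real (ball 0 r) := by
    simp_rw [congrFun (hslice w), norm_indicator_eq_indicator_norm,
      integral_indicator_const _ measurableSet_ball, measureReal_def,
      Measure.addHaar_ball_center μ _ r, smul_eq_mul, mul_comm]
  have hprod : Integrable (S.indicator fun p => f p.2) (μ.prod ν) := by
    refine (integrable_prod_iff' (hf.1.comp_snd.indicator hS)).2 ⟨?_, ?_⟩
    · refine Filter.Eventually.of_forall fun w => ?_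
      rw [hslice]
      exact (integrableOn_const measure_ball_lt_top.ne).integrable_indicator measurableSet_ball
    · simpa only [hslice_norm] using hf.norm.mul_const _
  refine hprod.integral_prod_left.congr (Filter.Eventually.of_forall fun x => ?_)
  dsimp only
  rw [← integral_indicator (measurableSet_ball.preimage measurable_fst)]
  simp [S, indicator]

end StripAverage

section EuclideanBall

variable {n : ℕ}

theorem eucBall2_eq_preimage_add_neg (z : (Fin n → ℝ) × (Fin n → ℝ)) (ρ : ℝ) :
    eucBall2 z ρ = (fun w => w + -z) ⁻¹' eucBall2 (0 : (Fin n → ℝ) × (Fin n → ℝ)) ρ := by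
  ext w
  simp [eucBall2, sub_eq_add_neg]

theorem volume_eucBall2 (z : (Fin n → ℝ) × (Fin n → ℝ)) (ρ : ℝ) :
    volume (eucBall2 z ρ) = volume (eucBall2 (0 : (Fin n → ℝ) × (Fin n → ℝ)) ρ) := by
  rw [eucBall2_eq_preimage_add_neg, Measure.volume_eq_prod, measure_preimage_add_right]

-- `ball` is taken in the sup metric of `Fin n → ℝ` and of products, i.e. it is a cube.
theorem eucBall2_subset_ball (z : (Fin n → ℝ) × (Fin n → ℝ)) {ρ : ℝ} (hρ : 0 < ρ) :
    eucBall2 z ρ ⊆ ball z ρ := by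
  intro w hw
  have hterm (i : Fin n) : (w.1 i - z.1 i) ^ 2 + (w.2 i - z.2 i) ^ 2 < ρ ^ 2 :=
    (Finset.single_le_sum (f := fun j => (w.1 j - z.1 j) ^ 2 + (w.2 j - z.2 j) ^ 2)
      (fun j _ => by positivity) (Finset.mem_univ i)).trans_lt hw
  rw [← ball_prod_same, mem_prod, mem_ball, mem_ball, dist_pi_lt_iff hρ, dist_pi_lt_iff hρ]
  refine ⟨fun i => abs_lt_of_sq_lt_sq ?_ hρ.le, fun i => abs_lt_of_sq_lt_sq ?_ hρ.le⟩ <;>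
    nlinarith [hterm i, sq_nonneg (w.1 i - z.1 i), sq_nonneg (w.2 i - z.2 i)]

end EuclideanBall

theorem le_setIntegral_strip_of_le_average {n : ℕ} {G : (Fin n → ℝ) × (Fin n → ℝ) → ℝ}
    (hG : 0 ≤ G) {ρ : ℝ} (hρ : 0 < ρ) {x y y₀ : Fin n → ℝ} (hy : y ∈ ball y₀ ρ)
    (hint : IntegrableOn G (univ ×ˢ closedBall y₀ (2 * ρ)))
    (hsub : G (x, y) ≤ (volume (eucBall2 (x, y) ρ)).toReal⁻¹ * ∫ w in eucBall2 (x, y) ρ, G w) :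
    G (x, y) ≤ (volume (eucBall2 (0 : (Fin n → ℝ) × (Fin n → ℝ)) ρ)).toReal⁻¹ *
      ∫ w in Prod.fst ⁻¹' ball x ρ, G w ∂volume.restrict (univ ×ˢ closedBall y₀ (2 * ρ)) := by
  rw [volume_eucBall2] at hsub
  refine hsub.trans (mul_le_mul_of_nonneg_left ?_ (by positivity))
  rw [Measure.restrict_restrict (measurableSet_ball.preimage measurable_fst)]
  refine setIntegral_mono_set (hint.mono_set inter_subset_right) (ae_of_all _ hG)
    (LE.le.eventuallyLE ?_)
  refine (eucBall2_subset_ball _ hρ).trans ?_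
  rw [← ball_prod_same]
  rintro ⟨w₁, w₂⟩ ⟨hw₁, hw₂⟩
  refine ⟨hw₁, mem_univ _, ?_⟩
  rw [mem_closedBall]
  linarith [dist_triangle w₂ y y₀, mem_ball.1 hw₂, mem_ball.1 hy]

theorem statement17 {n : ℕ} (G : (Fin n → ℝ) × (Fin n → ℝ) → ℝ)
    (hcont : Continuous G) (hpos : ∀ z, 0 < G z)
    (hsub : ∀ (z : (Fin n → ℝ) × (Fin n → ℝ)) (ρ : ℝ), 0 < ρ →
      G z ≤ (volume (eucBall2 z ρ)).toReal⁻¹ * ∫ w in eucBall2 z ρ, G w)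
    (hint : ∀ K : Set (Fin n → ℝ), IsCompact K →
      IntegrableOn G (Set.univ ×ˢ K) volume) :
    Continuous fun y : Fin n → ℝ => ∫ x : Fin n → ℝ, G (x, y) := by
  refine continuous_iff_continuousAt.2 fun y₀ => ?_
  have hG : 0 ≤ G := fun z => (hpos z).le
  have hslab := hint _ (isCompact_closedBall y₀ (2 * 1))
  refine continuousAt_of_dominated
    (bound := fun x => (volume (eucBall2 (0 : (Fin n → ℝ) × (Fin n → ℝ)) 1)).toReal⁻¹ *
      ∫ w in Prod.fst ⁻¹' ball x 1, G w ∂volume.restrict (univ ×ˢ closedBall y₀ (2 * 1)))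
    (Filter.Eventually.of_forall fun y => (hcont.comp (.prodMk_left y)).aestronglyMeasurable)
    ?_ ((integrable_setIntegral_fst_preimage_ball volume hslab 1).const_mul _)
    (ae_of_all _ fun x => (hcont.comp (.prodMk_right x)).continuousAt)
  filter_upwards [ball_mem_nhds y₀ one_pos] with y hy
  refine ae_of_all _ fun x => ?_
  rw [Real.norm_of_nonneg (hG _)]
  exact le_setIntegral_strip_of_le_average hG one_pos hy hslab (hsub _ 1 one_pos)
end
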